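/- Let C ∈ Matrix (Fin 3) (Fin 3) ℝ be skew-symmetric (Cᵀ = −C), let P ∈ Matrix (Fin 3) (Fin 3) ℝ commute with C (P C = C P), let A, B ∈ Matrix (Fin 3) (Fin 2) ℝ be fixed, and let E, K : ℝ → Matrix (Fin 3) (Fin 2) ℝ be differentiable with E'(s) = C (E(s) + A) and K'(s) = C (K(s) + B) for all s ∈ ℝ. Then the function U₅(s) = (E(s) + A)ᵀ P (K(s) + B) is constant on ℝ. (The alternative first integral U₅ of Remark 2, where P plays the role of the first fundamental tensor a of the reference surface.) -/

import Mathlib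

/-!
Along a solution the derivative of `(E + A)ᵀ P (K + B)` is
`(C(E + A))ᵀ P (K + B) + (E + A)ᵀ P C (K + B) = (E + A)ᵀ (Cᵀ P + P C) (K + B)`,
which vanishes because `Cᵀ = -C` and `P C = C P`.
-/

open Matrix

namespace Matrix

section Calculus

variable {𝕜 : Type*} [NontriviallyNormedField 𝕜] {l m n : Type*}

def HasEntrywiseDerivAt (X : 𝕜 → Matrix m n 𝕜) (X' : Matrix m n 𝕜) (s : 𝕜) : Prop :=
  ∀ i j, HasDerivAt (fun u => X u i j) (X' i j) s

namespace HasEntrywiseDerivAt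

variable {X : 𝕜 → Matrix m n 𝕜} {X' : Matrix m n 𝕜} {s : 𝕜}

theorem add_const (hX : HasEntrywiseDerivAt X X' s) (A : Matrix m n 𝕜) :
    HasEntrywiseDerivAt (fun u => X u + A) X' s :=
  fun i j => (hX i j).add_const (A i j)

theorem transpose (hX : HasEntrywiseDerivAt X X' s) :
    HasEntrywiseDerivAt (fun u => (X u)ᵀ) X'ᵀ s :=
  fun i j => hX j i

theorem mul_const [Fintype n] (hX : HasEntrywiseDerivAt X X' s) (P : Matrix n l 𝕜) :
    HasEntrywiseDerivAt (fun u => X u * P) (X' * P) s := by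
  intro i k
  simp only [mul_apply]
  exact HasDerivAt.fun_sum fun j _ => (hX i j).mul_const (P j k)

theorem mul [Fintype n] {Y : 𝕜 → Matrix n l 𝕜} {Y' : Matrix n l 𝕜}
    (hX : HasEntrywiseDerivAt X X' s) (hY : HasEntrywiseDerivAt Y Y' s) :
    HasEntrywiseDerivAt (fun u => X u * Y u) (X' * Y s + X s * Y') s := by
  intro i k
  simp only [add_apply, mul_apply, ← Finset.sum_add_distrib]
  exact HasDerivAt.fun_sum fun j _ => (hX i j).mul (hY j k)

end HasEntrywiseDerivAt

end Calculus

theorem eq_of_hasEntrywiseDerivAt_zero {m n : Type*} {X : ℝ → Matrix m n ℝ}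
    (hX : ∀ s, HasEntrywiseDerivAt X 0 s) (s t : ℝ) : X s = X t := by
  ext i j
  exact is_const_of_deriv_eq_zero (fun u => (hX u i j).differentiableAt)
    (fun u => (hX u i j).deriv) s t

theorem skew_commute_transpose_mul_mul_add_eq_zero {R : Type*} [CommRing R] {m n p : Type*}
    [Fintype m] {C P : Matrix m m R} (hC : Cᵀ = -C) (hPC : P * C = C * P)
    (X : Matrix m n R) (Y : Matrix m p R) :
    (C * X)ᵀ * P * Y + Xᵀ * P * (C * Y) = 0 := by
  calc (C * X)ᵀ * P * Y + Xᵀ * P * (C * Y) = Xᵀ * (Cᵀ * P + P * C) * Y := by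
        simp only [transpose_mul, Matrix.mul_add, Matrix.add_mul, Matrix.mul_assoc]
    _ = 0 := by rw [hC, hPC, Matrix.neg_mul, neg_add_cancel, Matrix.mul_zero, Matrix.zero_mul]

end Matrix

/-- `U₅(s) = (E(s)+A)ᵀ P (K(s)+B)` is a first integral of the coupled
characteristic system `dE/ds = C(E+A)`, `dK/ds = C(K+B)` with `C` skew-symmetric,
whenever `P` commutes with `C`. -/
theorem first_integral_U5
    (C P : Matrix (Fin 3) (Fin 3) ℝ) (hC : Cᵀ = -C) (hPC : P * C = C * P)
    (A B : Matrix (Fin 3) (Fin 2) ℝ)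
    (E K : ℝ → Matrix (Fin 3) (Fin 2) ℝ)
    (hE : ∀ (s : ℝ) (i : Fin 3) (j : Fin 2),
      HasDerivAt (fun u => E u i j) ((C * (E s + A)) i j) s)
    (hK : ∀ (s : ℝ) (i : Fin 3) (j : Fin 2),
      HasDerivAt (fun u => K u i j) ((C * (K s + B)) i j) s) :
    ∀ s : ℝ, (E s + A)ᵀ * P * (K s + B) = (E 0 + A)ᵀ * P * (K 0 + B) := by
  have hU : ∀ t, HasEntrywiseDerivAt (fun u => (E u + A)ᵀ * P * (K u + B)) 0 t := by
    intro t
    have hprod := ((HasEntrywiseDerivAt.add_const (hE t) A).transpose.mul_const P).mul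
      (HasEntrywiseDerivAt.add_const (hK t) B)
    rwa [skew_commute_transpose_mul_mul_add_eq_zero hC hPC] at hprod
  exact fun s => eq_of_hasEntrywiseDerivAt_zero hU s 0
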